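/- Outer nose retraction, equal case: for positive integers α₁ = αₙ and n ≥ 3, Z(α₁, α₂, ..., α_{n-1}, αₙ) = Z(α₂, ..., α_{n-1}) + α₁. -/

import Mathlib

/-- Upper-arc partner of point `k ∈ {1,…,2·sum}` in a meander whose upper arcs
form consecutive rainbow families of the given sizes (1-indexed points). -/
def upperPartner : List ℕ → ℕ → ℕ
  | [], k => k
  | a :: rest, k => if k ≤ 2 * a then 2 * a + 1 - k else 2 * a + upperPartner rest (k - 2 * a)

/-- One step along the bi-rainbow meander: upper or lower partner. -/
def meanderRel (l : List ℕ) (x y : ℕ) : Prop :=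
  y = upperPartner l x ∨ y = 2 * l.sum + 1 - x

/-- Connectivity relation on the points `{1,…,2α}` of the bi-rainbow meander `RM l`. -/
def meanderSetoid (l : List ℕ) : Setoid {k : ℕ // 1 ≤ k ∧ k ≤ 2 * l.sum} :=
  ⟨fun a b => Relation.EqvGen (fun a b => meanderRel l a.1 b.1) a b,
    Relation.EqvGen.is_equivalence _⟩

/-- Number of connected components (Jordan curves) of the bi-rainbow meander `RM l`. -/
noncomputable def Z (l : List ℕ) : ℕ := Nat.card (Quotient (meanderSetoid l))

/-!
Number the points of `RM(a, mid, a)` by `1, …, 4a + 2s`, where `s = mid.sum`. The points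
`2a + 1, …, 2a + 2s` carry the upper arcs of `mid`, and the lower arcs reflect them among
themselves as well, so they form a copy of `RM(mid)` shifted by `2a`. The remaining `4a` points
split into the `a` quadruples `{i + 1, 2a - i, 2a + 2s + 1 + i, 4a + 2s - i}`, each of which is
closed under both kinds of arcs and connected by them: these are the `a` extra curves.
-/

abbrev MeanderPoint (l : List ℕ) := {k : ℕ // 1 ≤ k ∧ k ≤ 2 * l.sum}

instance (l : List ℕ) : Finite (MeanderPoint l) := (Set.finite_Icc 1 (2 * l.sum)).to_subtype

theorem meanderSetoid_of_meanderRel {l : List ℕ} {x y : MeanderPoint l}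
    (h : meanderRel l x y) : meanderSetoid l x y :=
  Relation.EqvGen.rel _ _ h

theorem upperPartner_append_left (l l' : List ℕ) {j : ℕ} (h1 : 1 ≤ j) (h2 : j ≤ 2 * l.sum) :
    upperPartner (l ++ l') j = upperPartner l j := by
  induction l generalizing j with
  | nil => simp at h2; omega
  | cons b rest ih =>
    simp only [List.sum_cons] at h2
    simp only [List.cons_append, upperPartner]
    split_ifs with h
    · rfl
    · rw [ih (by omega) (by omega)]

theorem upperPartner_append_right (l l' : List ℕ) {j : ℕ} (h : 2 * l.sum < j) :
    upperPartner (l ++ l') j = 2 * l.sum + upperPartner l' (j - 2 * l.sum) := by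
  induction l generalizing j with
  | nil => simp
  | cons b rest ih =>
    simp only [List.sum_cons] at h ⊢
    simp only [List.cons_append, upperPartner, if_neg (show ¬ j ≤ 2 * b by omega),
      ih (show 2 * rest.sum < j - 2 * b by omega), Nat.sub_sub, ← mul_add]
    ring

theorem upperPartner_mem_Icc (l : List ℕ) {j : ℕ} (h1 : 1 ≤ j) (h2 : j ≤ 2 * l.sum) :
    upperPartner l j ∈ Set.Icc 1 (2 * l.sum) := by
  induction l generalizing j with
  | nil => simp at h2; omega
  | cons b rest ih =>
    simp only [List.sum_cons] at h2 ⊢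
    simp only [upperPartner, Set.mem_Icc]
    split_ifs with h
    · omega
    · obtain ⟨_, _⟩ := ih (j := j - 2 * b) (by omega) (by omega)
      omega

section Nose

variable (a : ℕ) (mid : List ℕ)

theorem sum_nose : (a :: mid ++ [a]).sum = 2 * a + mid.sum := by
  simp only [List.cons_append, List.sum_cons, List.sum_append, List.sum_nil, add_zero]
  omega

theorem upperPartner_nose_left {k : ℕ} (h : k ≤ 2 * a) :
    upperPartner (a :: mid ++ [a]) k = 2 * a + 1 - k := by
  simp only [List.cons_append, upperPartner, if_pos h]

theorem upperPartner_nose_inner {k : ℕ} (h1 : 2 * a < k) (h2 : k ≤ 2 * a + 2 * mid.sum) :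
    upperPartner (a :: mid ++ [a]) k = 2 * a + upperPartner mid (k - 2 * a) := by
  simp only [List.cons_append, upperPartner, if_neg (show ¬ k ≤ 2 * a by omega),
    upperPartner_append_left mid [a] (show 1 ≤ k - 2 * a by omega) (by omega)]

theorem upperPartner_nose_right {k : ℕ} (h1 : 2 * a + 2 * mid.sum < k)
    (h2 : k ≤ 4 * a + 2 * mid.sum) :
    upperPartner (a :: mid ++ [a]) k = 6 * a + 4 * mid.sum + 1 - k := by
  simp only [List.cons_append, upperPartner, if_neg (show ¬ k ≤ 2 * a by omega),
    upperPartner_append_right mid [a] (show 2 * mid.sum < k - 2 * a by omega),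
    if_pos (show k - 2 * a - 2 * mid.sum ≤ 2 * a by omega)]
  omega

def outerCycle (s x : ℕ) : ℕ :=
  if x ≤ a then x - 1
  else if x ≤ 2 * a then 2 * a - x
  else if x ≤ 3 * a + 2 * s then x - (2 * a + 2 * s + 1)
  else 4 * a + 2 * s - x

theorem meanderRel_nose_of_inner {x y : ℕ} (hx : 2 * a < x ∧ x ≤ 2 * a + 2 * mid.sum)
    (h : meanderRel (a :: mid ++ [a]) x y) :
    (2 * a < y ∧ y ≤ 2 * a + 2 * mid.sum) ∧ meanderRel mid (x - 2 * a) (y - 2 * a) := by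
  have hsum := sum_nose a mid
  rcases h with h | h
  · rw [upperPartner_nose_inner a mid hx.1 hx.2] at h
    obtain ⟨_, _⟩ := upperPartner_mem_Icc mid (j := x - 2 * a) (by omega) (by omega)
    exact ⟨by omega, Or.inl (by omega)⟩
  · exact ⟨by omega, Or.inr (by omega)⟩

theorem meanderRel_nose_of_outer {x y : ℕ} (hx1 : 1 ≤ x) (hx2 : x ≤ 4 * a + 2 * mid.sum)
    (hx : ¬ (2 * a < x ∧ x ≤ 2 * a + 2 * mid.sum)) (h : meanderRel (a :: mid ++ [a]) x y) :
    ¬ (2 * a < y ∧ y ≤ 2 * a + 2 * mid.sum) ∧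
      outerCycle a mid.sum x = outerCycle a mid.sum y := by
  have hsum := sum_nose a mid
  rcases h with h | h
  · rcases le_or_gt x (2 * a) with h1 | h1
    · rw [upperPartner_nose_left a mid h1] at h
      refine ⟨by omega, ?_⟩
      unfold outerCycle; split_ifs <;> omega
    · rw [upperPartner_nose_right a mid (by omega) hx2] at h
      refine ⟨by omega, ?_⟩
      unfold outerCycle; split_ifs <;> omega
  · refine ⟨by omega, ?_⟩
    unfold outerCycle; split_ifs <;> omega

theorem meanderRel_nose_shift {p q : ℕ} (hp1 : 1 ≤ p) (hp2 : p ≤ 2 * mid.sum)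
    (h : meanderRel mid p q) : meanderRel (a :: mid ++ [a]) (2 * a + p) (2 * a + q) := by
  rcases h with h | h
  · left
    rw [upperPartner_nose_inner a mid (by omega) (by omega), Nat.add_sub_cancel_left, h]
  · right
    rw [sum_nose]
    omega

theorem val_le_nose (x : MeanderPoint (a :: mid ++ [a])) : x.1 ≤ 4 * a + 2 * mid.sum := by
  have := x.2.2
  have := sum_nose a mid
  omega

theorem outerCycle_lt {x : ℕ} (hx1 : 1 ≤ x) (hx2 : x ≤ 4 * a + 2 * mid.sum)
    (hx : ¬ (2 * a < x ∧ x ≤ 2 * a + 2 * mid.sum)) : outerCycle a mid.sum x < a := by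
  unfold outerCycle; split_ifs <;> omega

noncomputable def noseLabel (x : MeanderPoint (a :: mid ++ [a])) :
    Quotient (meanderSetoid mid) ⊕ Fin a :=
  if h : 2 * a < x.1 ∧ x.1 ≤ 2 * a + 2 * mid.sum then
    .inl ⟦⟨x.1 - 2 * a, by omega⟩⟧
  else
    .inr ⟨outerCycle a mid.sum x.1, outerCycle_lt a mid x.2.1 (val_le_nose a mid x) h⟩

def noseShift (p : MeanderPoint mid) : MeanderPoint (a :: mid ++ [a]) :=
  ⟨2 * a + p.1, by rw [sum_nose]; omega⟩

noncomputable def noseRep : Quotient (meanderSetoid mid) ⊕ Fin a → MeanderPoint (a :: mid ++ [a])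
  | .inl q => noseShift a mid q.out
  | .inr i => ⟨i + 1, by rw [sum_nose]; omega⟩

theorem noseLabel_shift (p : MeanderPoint mid) :
    noseLabel a mid (noseShift a mid p) = .inl ⟦p⟧ := by
  have := p.2
  rw [noseLabel, dif_pos (by simp only [noseShift]; omega)]
  congr
  simp only [noseShift, Nat.add_sub_cancel_left]

theorem noseLabel_rep : Function.RightInverse (noseRep a mid) (noseLabel a mid) := by
  rintro (q | i)
  · rw [noseRep, noseLabel_shift, Quotient.out_eq]
  · have := i.2
    rw [noseRep, noseLabel, dif_neg (by dsimp only; omega)]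
    congr
    dsimp only
    unfold outerCycle; split_ifs <;> omega

theorem noseLabel_eq_of_meanderRel {x y : MeanderPoint (a :: mid ++ [a])}
    (h : meanderRel (a :: mid ++ [a]) x y) : noseLabel a mid x = noseLabel a mid y := by
  by_cases hin : 2 * a < x.1 ∧ x.1 ≤ 2 * a + 2 * mid.sum
  · obtain ⟨hyin, hrel⟩ := meanderRel_nose_of_inner a mid hin h
    rw [noseLabel, noseLabel, dif_pos hin, dif_pos hyin]
    exact congrArg Sum.inl (Quotient.sound (meanderSetoid_of_meanderRel hrel))
  · obtain ⟨hyout, hcyc⟩ := meanderRel_nose_of_outer a mid x.2.1 (val_le_nose a mid x) hin h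
    rw [noseLabel, noseLabel, dif_neg hin, dif_neg hyout]
    simp only [hcyc]

theorem meanderSetoid_noseShift {p q : MeanderPoint mid} (h : meanderSetoid mid p q) :
    meanderSetoid (a :: mid ++ [a]) (noseShift a mid p) (noseShift a mid q) := by
  have hle : meanderSetoid mid ≤ (meanderSetoid (a :: mid ++ [a])).comap (noseShift a mid) :=
    Setoid.eqvGen_le fun p q hpq =>
      meanderSetoid_of_meanderRel (meanderRel_nose_shift a mid p.2.1 p.2.2 hpq)
  exact hle h

theorem meanderSetoid_noseRep_of_outer (x : MeanderPoint (a :: mid ++ [a]))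
    (hout : ¬ (2 * a < x.1 ∧ x.1 ≤ 2 * a + 2 * mid.sum)) :
    meanderSetoid (a :: mid ++ [a]) x (noseRep a mid (noseLabel a mid x)) := by
  have hx := val_le_nose a mid x
  have hsum := sum_nose a mid
  rw [noseLabel, dif_neg hout, noseRep]
  rcases x with ⟨k, hk1, hk2⟩
  dsimp only at hout hx ⊢
  unfold outerCycle
  split_ifs with h1 h2 h3
  · simp only [show k - 1 + 1 = k by omega]
    exact Setoid.refl' _ _
  · refine meanderSetoid_of_meanderRel (Or.inl ?_)
    rw [upperPartner_nose_left a mid h2]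
    dsimp only
    omega
  · have hj : 1 ≤ 6 * a + 4 * mid.sum + 1 - k ∧
        6 * a + 4 * mid.sum + 1 - k ≤ 2 * (a :: mid ++ [a]).sum := by omega
    refine Setoid.trans' _ (meanderSetoid_of_meanderRel (y := ⟨_, hj⟩) (Or.inl ?_))
      (meanderSetoid_of_meanderRel (Or.inr ?_))
    · rw [upperPartner_nose_right a mid (by omega) hx]
    · dsimp only
      omega
  · refine meanderSetoid_of_meanderRel (Or.inr ?_)
    dsimp only
    omega

theorem meanderSetoid_noseRep (x : MeanderPoint (a :: mid ++ [a])) :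
    meanderSetoid (a :: mid ++ [a]) x (noseRep a mid (noseLabel a mid x)) := by
  by_cases hin : 2 * a < x.1 ∧ x.1 ≤ 2 * a + 2 * mid.sum
  · have hx : x = noseShift a mid ⟨x.1 - 2 * a, by omega⟩ :=
      Subtype.ext (by dsimp only [noseShift]; omega)
    rw [hx, noseLabel_shift, noseRep]
    exact meanderSetoid_noseShift a mid (Setoid.symm' _ (Quotient.mk_out _))
  · exact meanderSetoid_noseRep_of_outer a mid x hin

theorem meanderSetoid_nose_eq_ker :
    meanderSetoid (a :: mid ++ [a]) = Setoid.ker (noseLabel a mid) := by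
  refine le_antisymm (Setoid.eqvGen_le fun x y h => noseLabel_eq_of_meanderRel a mid h)
    fun x y h => ?_
  have hy := meanderSetoid_noseRep a mid y
  rw [← Setoid.ker_def.mp h] at hy
  exact Setoid.trans' _ (meanderSetoid_noseRep a mid x) (Setoid.symm' _ hy)

end Nose

theorem outer_retraction_equal_general (a : ℕ) (mid : List ℕ) :
    Z (a :: mid ++ [a]) = Z mid + a := by
  rw [Z, meanderSetoid_nose_eq_ker, Nat.card_congr
    (Setoid.quotientKerEquivOfRightInverse _ _ (noseLabel_rep a mid)), Nat.card_sum, Nat.card_fin, Z]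

/-- Outer nose retraction, equal case: if α₁ = αₙ (and n ≥ 3), then
Z(α₁,α₂,…,α_{n-1},αₙ) = Z(α₂,…,α_{n-1}) + α₁. -/
theorem outer_retraction_equal (a : ℕ) (ha : 0 < a) (mid : List ℕ)
    (hpos : ∀ x ∈ mid, 0 < x) (hmid : mid ≠ []) :
    Z (a :: mid ++ [a]) = Z mid + a :=
  outer_retraction_equal_general a mid
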